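/- arXiv:2201.06492 — 4 statements merged into one kernel-verified Lean document; each statement's English description precedes it below -/
import Mathlib

section
/- If the segment [x+1..y] of a multiple sequence alignment is semi-repeat-free, then for every y' with y < y' ≤ n, the segment [x+1..y'] is also semi-repeat-free. -/
/-- Remove gap symbols (`none`) from a row fragment. -/
def spell {σ : Type*} (l : List (Option σ)) : List σ := l.filterMap id

/-- The fragment of row `R` spanning (0-based) columns `[x..y)` (paper's 1-based `[x+1..y]`). -/
def rowSeg {σ : Type*} (R : List (Option σ)) (x y : ℕ) : List (Option σ) := (R.drop x).take (y - x)

/-- `g(i,x)`: the (0-based) position in the gaps-removed row corresponding to column `x`,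
i.e. the number of non-gap symbols among the first `x` columns. -/
def gpos {σ : Type*} (R : List (Option σ)) (x : ℕ) : ℕ := (spell (R.take x)).length

/-- `u` occurs in `T` at (0-based) position `p`. -/
def occursAt {σ : Type*} (u T : List σ) (p : ℕ) : Prop := u <+: T.drop p

/-- Row substring `MSA[i][x+1..y]` (0-based: columns `[x..y)`) is semi-repeat-free:
for all rows `i'`, `spell(MSA[i][x+1..y])` occurs in the gaps-removed row `i'`
only at position `g(i',x)`. -/
def rowSRF {σ : Type*} {m : ℕ} (A : Fin m → List (Option σ)) (i : Fin m) (x y : ℕ) : Prop :=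
  ∀ i' : Fin m, ∀ p : ℕ,
    occursAt (spell (rowSeg (A i) x y)) (spell (A i')) p → p = gpos (A i') x

/-- Segment `[x+1..y]` (0-based: columns `[x..y)`) is semi-repeat-free. -/
def segSRF {σ : Type*} {m : ℕ} (A : Fin m → List (Option σ)) (x y : ℕ) : Prop :=
  ∀ i i' : Fin m, ∀ p : ℕ,
    occursAt (spell (rowSeg (A i) x y)) (spell (A i')) p → p = gpos (A i') x

/-- If segment [x+1..y] of the MSA is semi-repeat-free, then for every y' with
y < y' ≤ n, the segment [x+1..y'] is also semi-repeat-free. -/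
theorem stmt0 {σ : Type*} {m n : ℕ} (A : Fin m → List (Option σ))
    (hlen : ∀ i, (A i).length = n) (x y y' : ℕ)
    (hxy : x < y) (hyy' : y < y') (hy'n : y' ≤ n)
    (hne : ∀ i, spell (rowSeg (A i) x y) ≠ [])
    (h : segSRF A x y) : segSRF A x y' := by
  intro i i' p hp
  apply h i i' p
  have hpre : rowSeg (A i) x y <+: rowSeg (A i) x y' := by
    have : rowSeg (A i) x y = (rowSeg (A i) x y').take (y - x) := by
      simp [rowSeg, List.take_take, Nat.min_eq_left (by omega : y - x ≤ y' - x)]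
    rw [this]
    exact List.take_prefix _ _
  exact List.IsPrefix.trans (hpre.filterMap id) hp
end

section
/- If a row substring MSA[i][x..y] is semi-repeat-free, then MSA[i][x..y'] is semi-repeat-free for all y' with y < y' ≤ n. -/
/-- If row substring MSA[i][x+1..y] is semi-repeat-free (with nonempty spell),
then MSA[i][x+1..y'] is semi-repeat-free for all y' with y < y' ≤ n. -/
theorem stmt3 {σ : Type*} {m n : ℕ} (A : Fin m → List (Option σ))
    (hlen : ∀ i, (A i).length = n) (i : Fin m) (x y y' : ℕ)
    (hxy : x < y) (hyy' : y < y') (hy'n : y' ≤ n)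
    (hne : spell (rowSeg (A i) x y) ≠ [])
    (h : rowSRF A i x y) : rowSRF A i x y' := by
  intro i' p hp
  apply h i' p
  have hseg : rowSeg (A i) x y <+: rowSeg (A i) x y' := by
    have : rowSeg (A i) x y = (rowSeg (A i) x y').take (y - x) := by
      simp [rowSeg, List.take_take, Nat.min_eq_left (Nat.sub_le_sub_right hyy'.le x)]
    rw [this]
    exact List.take_prefix _ _
  exact (hseg.filterMap id).trans hp
end

section
/- Given m row substrings MSA[i][x..y_i] with spell(MSA[i][x..y_i]) nonempty for all i, let W be the set of (implicit or explicit) suffix-tree nodes of the generalized suffix tree GST of the gaps-removed rows corresponding to the strings spell(MSA[i][x..y_i]). Then every MSA[i][x..y_i] is semi-repeat-free if and only if W covers exactly m leaves of GST. -/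
lemma spell_split {σ : Type*} (R : List (Option σ)) (x : ℕ) :
    spell R = spell (R.take x) ++ spell (R.drop x) := by
  simp [spell, ← List.filterMap_append]

lemma drop_gpos {σ : Type*} (R : List (Option σ)) (x : ℕ) :
    (spell R).drop (gpos R x) = spell (R.drop x) := by
  rw [spell_split R x, gpos, List.drop_left]

lemma gpos_le {σ : Type*} (R : List (Option σ)) (x : ℕ) :
    gpos R x ≤ (spell R).length := by
  rw [spell_split R x, gpos, List.length_append]; omega

/-- the self-occurrence at `gpos` -/
lemma occ_self {σ : Type*} (R : List (Option σ)) (x y : ℕ) :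
    occursAt (spell (rowSeg R x y)) (spell R) (gpos R x) := by
  unfold occursAt
  rw [drop_gpos]
  exact (List.take_prefix _ _).filterMap id

/-- lifting occurrences between the row and the terminated string α. -/
lemma occ_lift {σ : Type*} {m : ℕ} (u T : List σ) (j : Fin m) (p : ℕ) (hu : u ≠ []) :
    occursAt (u.map Sum.inl) ((T.map Sum.inl) ++ [(Sum.inr j : σ ⊕ Fin m)]) p ↔
      occursAt u T p := by
  unfold occursAt
  rw [List.drop_append, ← List.map_drop]
  set v := T.drop p with hv
  set r := ([(Sum.inr j : σ ⊕ Fin m)]).drop (p - (T.map Sum.inl).length) with hr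
  constructor
  · intro h
    by_cases hlen : u.length ≤ v.length
    · have h' : (u.map Sum.inl) = ((v.map Sum.inl) ++ r).take (u.map Sum.inl).length :=
        List.prefix_iff_eq_take.mp h
      rw [List.take_append] at h'
      have h0 : (u.map (Sum.inl : σ → σ ⊕ Fin m)).length
          - (v.map (Sum.inl : σ → σ ⊕ Fin m)).length = 0 := by
        rw [List.length_map, List.length_map]; omega
      rw [h0, List.take_zero, List.append_nil, List.length_map, ← List.map_take] at h'
      have huv : u = v.take u.length :=
        List.map_injective_iff.mpr Sum.inl_injective h'
      rw [huv]; exact List.take_prefix _ _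
    · exfalso
      push_neg at hlen
      have hrcases : r = [(Sum.inr j : σ ⊕ Fin m)] ∨ r = [] := by
        rw [hr]
        rcases p - (T.map Sum.inl).length with _ | k
        · left; rfl
        · right; simp
      rcases hrcases with hre | hre
      · have hle := h.length_le
        rw [hre, List.length_append, List.length_map, List.length_map,
          List.length_singleton] at hle
        have heq : u.map Sum.inl = v.map Sum.inl ++ r := by
          apply h.eq_of_length_le
          rw [hre, List.length_append, List.length_map, List.length_map,
            List.length_singleton]
          omega
        have hmem : (Sum.inr j : σ ⊕ Fin m) ∈ u.map Sum.inl := by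
          rw [heq, hre]; simp
        simp at hmem
      · rw [hre, List.append_nil] at h
        have := h.length_le
        rw [List.length_map, List.length_map] at this
        omega
  · intro h
    exact ((h.map Sum.inl).trans (List.prefix_append _ _))

/-- with α_i = spell(row i)·$_i (distinct terminators modelled by Sum.inr i),
all m row substrings MSA[i][x+1..y_i] (with nonempty spell) are semi-repeat-free iff the
corresponding set W of suffix-tree nodes covers exactly m leaves of the GST, i.e. the number
of pairs (i', z) at which some spell(MSA[i][x+1..y_i]) occurs as a prefix of the suffix
α_{i'}[z..] equals m. -/
theorem stmt9 {σ : Type*} {m n : ℕ} (hm : 0 < m) (A : Fin m → List (Option σ))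
    (hlen : ∀ i, (A i).length = n) (x : ℕ) (yv : Fin m → ℕ)
    (hxy : ∀ i, x < yv i) (hyn : ∀ i, yv i ≤ n)
    (hne : ∀ i, spell (rowSeg (A i) x (yv i)) ≠ []) :
    (∀ i, rowSRF A i x (yv i)) ↔
    {q : Fin m × ℕ | ∃ i : Fin m,
        occursAt ((spell (rowSeg (A i) x (yv i))).map Sum.inl)
          ((spell (A q.1)).map Sum.inl ++ [Sum.inr q.1]) q.2}.ncard = m := by
  set W : Set (Fin m × ℕ) := {q : Fin m × ℕ | ∃ i : Fin m,
        occursAt ((spell (rowSeg (A i) x (yv i))).map Sum.inl)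
          ((spell (A q.1)).map Sum.inl ++ [Sum.inr q.1]) q.2} with hW
  set f : Fin m → Fin m × ℕ := fun i' => (i', gpos (A i') x) with hf
  have hfin : Function.Injective f := by
    intro a b hab
    exact congrArg Prod.fst hab
  have hbase : Set.range f ⊆ W := by
    rintro q ⟨i', rfl⟩
    exact ⟨i', (occ_lift _ _ _ _ (hne i')).mpr (occ_self (A i') x (yv i'))⟩
  have hrange : (Set.range f).ncard = m := by
    rw [← Set.image_univ, Set.ncard_image_of_injective _ hfin, Set.ncard_univ,
      Nat.card_eq_fintype_card, Fintype.card_fin]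
  constructor
  · intro hsrf
    have hWeq : W = Set.range f := by
      apply Set.Subset.antisymm _ hbase
      rintro ⟨i', p⟩ ⟨i, hocc⟩
      have := hsrf i i' p ((occ_lift _ _ _ _ (hne i)).mp hocc)
      exact ⟨i', by simp [hf, this]⟩
    rw [hWeq, hrange]
  · intro hcard i i' p hocc
    have hWfin : W.Finite := by
      by_contra hinf
      rw [Set.Infinite.ncard hinf] at hcard
      omega
    have hWeq : Set.range f = W :=
      Set.eq_of_subset_of_ncard_le hbase (by rw [hcard, hrange]) hWfin
    have hmem : (i', p) ∈ W :=
      ⟨i, (occ_lift _ _ _ _ (hne i)).mpr hocc⟩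
    rw [← hWeq] at hmem
    obtain ⟨i'', heq⟩ := hmem
    obtain ⟨h1, h2⟩ := Prod.mk.injEq .. ▸ heq
    simp only [hf, Prod.mk.injEq] at heq
    rw [← heq.2, heq.1]
end

section
/- A segmentation S of an MSA induces a semi-repeat-free elastic founder graph G(S) if and only if every segment of S is semi-repeat-free. -/
/-- Label of the node of block k corresponding to row i: spell(MSA[i][x_k..y_k]),
where the segmentation is given by boundaries c 0 = 0 < c 1 < ... < c b = n. -/
def blockStr {σ : Type*} {m b : ℕ} (A : Fin m → List (Option σ))
    (c : Fin (b+1) → ℕ) (i : Fin m) (k : Fin b) : List σ :=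
  spell (rowSeg (A i) (c k.castSucc) (c k.succ))

/-- A node of the induced elastic founder graph G(S): a block index together with a label
that is spelled by some row in that block. -/
def ValidNode {σ : Type*} {m b : ℕ} (A : Fin m → List (Option σ))
    (c : Fin (b+1) → ℕ) (v : Fin b × List σ) : Prop :=
  ∃ i : Fin m, v.2 = blockStr A c i v.1

/-- Edges of G(S): between consecutive blocks, witnessed by a row spelling both labels
(equivalently spell(MSA[i][x_k..y_{k+1}]) = ℓ(v)ℓ(w)). -/
def EdgeRel {σ : Type*} {m b : ℕ} (A : Fin m → List (Option σ))
    (c : Fin (b+1) → ℕ) (v w : Fin b × List σ) : Prop :=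
  (w.1 : ℕ) = (v.1 : ℕ) + 1 ∧
  ∃ i : Fin m, v.2 = blockStr A c i v.1 ∧ w.2 = blockStr A c i w.1

/-- Label of a path: the concatenation of node labels. -/
def pathLabel {σ : Type*} {b : ℕ} (ns : List (Fin b × List σ)) : List σ :=
  (ns.map Prod.snd).flatten

/-- G(S) is semi-repeat-free: whenever the label of a valid node v occurs as a standard
substring of a path (i.e. the occurrence uses all vertices of the path), the occurrence
starts at the very beginning of the path label and the path starts in the same block as v. -/
def efgSRF {σ : Type*} {m b : ℕ} (A : Fin m → List (Option σ))
    (c : Fin (b+1) → ℕ) : Prop :=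
  ∀ v : Fin b × List σ, ValidNode A c v →
  ∀ (w : Fin b × List σ) (rest : List (Fin b × List σ)),
    ValidNode A c w → (∀ u ∈ rest, ValidNode A c u) →
    List.Chain (EdgeRel A c) w rest →
    ∀ p : ℕ, occursAt v.2 (pathLabel (w :: rest)) p →
      p < w.2.length →
      (pathLabel ((w :: rest).dropLast)).length < p + v.2.length →
      p = 0 ∧ w.1 = v.1


namespace SemiRepeatFree

variable {σ : Type*}

lemma occursAt_trans {u X T : List σ} {q r : ℕ} (h₁ : occursAt u X q) (h₂ : occursAt X T r) :
    occursAt u T (r + q) := by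
  rw [occursAt, ← List.drop_drop]
  exact h₁.trans (h₂.drop q)

lemma occursAt_sub {u X T : List σ} {p r : ℕ} (hu : occursAt u T p)
    (hX : occursAt X T r) (h₁ : r ≤ p) (h₂ : p + u.length ≤ r + X.length) :
    occursAt u X (p - r) := by
  have hdrop : T.drop p = (T.drop r).drop (p - r) := by
    rw [List.drop_drop, Nat.add_sub_cancel' h₁]
  refine List.prefix_of_prefix_length_le hu ?_ (by simp only [List.length_drop]; omega)
  rw [hdrop]
  exact hX.drop _

lemma spell_append (l₁ l₂ : List (Option σ)) : spell (l₁ ++ l₂) = spell l₁ ++ spell l₂ :=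
  List.filterMap_append

lemma rowSeg_append (R : List (Option σ)) {x y z : ℕ} (hxy : x ≤ y) (hyz : y ≤ z) :
    rowSeg R x z = rowSeg R x y ++ rowSeg R y z := by
  rw [rowSeg, rowSeg, rowSeg, show z - x = (y - x) + (z - y) by omega, List.take_add,
    List.drop_drop, Nat.add_sub_cancel' hxy]

lemma gpos_add (R : List (Option σ)) {x y : ℕ} (h : x ≤ y) :
    gpos R y = gpos R x + (spell (rowSeg R x y)).length := by
  rw [gpos, gpos, rowSeg, ← List.length_append, ← spell_append, ← List.take_add,
    Nat.add_sub_cancel' h]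

lemma occursAt_spell_rowSeg (R : List (Option σ)) (x y : ℕ) :
    occursAt (spell (rowSeg R x y)) (spell R) (gpos R x) := by
  have hdrop : (spell R).drop (gpos R x) = spell (R.drop x) := by
    have hsplit : spell R = spell (R.take x) ++ spell (R.drop x) := by
      rw [← spell_append, List.take_append_drop]
    rw [hsplit]
    exact List.drop_left
  rw [occursAt, hdrop]
  exact (List.take_prefix _ _).filterMap id

lemma pathLabel_cons {b : ℕ} (v : Fin b × List σ) (l : List (Fin b × List σ)) :
    pathLabel (v :: l) = v.2 ++ pathLabel l := by
  simp [pathLabel]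

lemma exists_castSucc_le_lt_succ {α : Type*} [LinearOrder α] :
    ∀ {n : ℕ} (f : Fin (n + 1) → α) {a : α}, f 0 ≤ a → a < f (Fin.last n) →
      ∃ i : Fin n, f i.castSucc ≤ a ∧ a < f i.succ
  | 0, f, _, h₀, hlast => absurd hlast (not_lt_of_ge h₀)
  | n + 1, f, a, h₀, hlast => by
    by_cases h : a < f (Fin.last n).castSucc
    · obtain ⟨i, hi⟩ := exists_castSucc_le_lt_succ (fun j => f j.castSucc) h₀ h
      exact ⟨i.castSucc, hi⟩
    · exact ⟨Fin.last n, le_of_not_gt h, hlast⟩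

lemma _root_.StrictMono.eq_of_castSucc_le_of_lt_succ {α : Type*} [Preorder α] {n : ℕ}
    {f : Fin (n + 1) → α} (hf : StrictMono f) {j k : Fin n}
    (h₁ : f j.castSucc ≤ f k.castSucc) (h₂ : f k.castSucc < f j.succ) : j = k := by
  rcases lt_trichotomy j k with hjk | rfl | hkj
  · exact absurd (hf.monotone (Fin.succ_le_castSucc_iff.mpr hjk)) (not_le_of_gt h₂)
  · rfl
  · exact absurd h₁ (not_le_of_gt (hf (Fin.castSucc_lt_castSucc_iff.mpr hkj)))

variable {m b : ℕ} {A : Fin m → List (Option σ)} {c : Fin (b + 1) → ℕ}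

lemma occursAt_blockStr (i : Fin m) (k : Fin b) :
    occursAt (blockStr A c i k) (spell (A i)) (gpos (A i) (c k.castSucc)) :=
  occursAt_spell_rowSeg _ _ _

lemma gpos_succ (hc : Monotone c) (i : Fin m) (k : Fin b) :
    gpos (A i) (c k.succ) = gpos (A i) (c k.castSucc) + (blockStr A c i k).length :=
  gpos_add _ (hc k.castSucc_le_succ)

lemma strictMono_gpos (hc : Monotone c) (hne : ∀ i k, blockStr A c i k ≠ []) (i : Fin m) :
    StrictMono fun j => gpos (A i) (c j) := by
  refine Fin.strictMono_iff_lt_succ.mpr fun k => ?_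
  have := List.length_pos_iff.mpr (hne i k)
  simp only [gpos_succ hc i k]
  omega

lemma eq_of_occursAt_blockStr (hc : Monotone c) (hne : ∀ i k, blockStr A c i k ≠ [])
    {k : Fin b} (hseg : segSRF A (c k.castSucc) (c k.succ)) {i i' : Fin m} {j : Fin b} {q : ℕ}
    (hq : q < (blockStr A c i' j).length)
    (hocc : occursAt (blockStr A c i k) (spell (A i')) (gpos (A i') (c j.castSucc) + q)) :
    q = 0 ∧ j = k := by
  have hpos := hseg i i' _ hocc
  have hsucc := gpos_succ (A := A) hc i' j
  obtain rfl : j = k := (strictMono_gpos hc hne i').eq_of_castSucc_le_of_lt_succ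
    (by omega) (by omega)
  exact ⟨by omega, rfl⟩

lemma exists_occursAt_pathLabel_of_length_le_one (hc : Monotone c) {w : Fin b × List σ}
    {rest : List (Fin b × List σ)} (hw : ValidNode A c w)
    (hchain : List.IsChain (EdgeRel A c) (w :: rest)) (hrest : rest.length ≤ 1) :
    ∃ i, w.2 = blockStr A c i w.1 ∧
      occursAt (pathLabel (w :: rest)) (spell (A i)) (gpos (A i) (c w.1.castSucc)) := by
  rcases rest with _ | ⟨w₂, _ | ⟨u, r⟩⟩
  · obtain ⟨i, hi⟩ := hw
    refine ⟨i, hi, ?_⟩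
    rw [pathLabel_cons, hi]
    simpa [pathLabel] using occursAt_blockStr i w.1
  · obtain ⟨⟨hsucc, i, hi, hi₂⟩, -⟩ := List.isChain_cons_cons.mp hchain
    have hw₂ : w.1.succ = w₂.1.castSucc := Fin.ext (by simp [hsucc])
    refine ⟨i, hi, ?_⟩
    have hlabel : pathLabel [w, w₂] = spell (rowSeg (A i) (c w.1.castSucc) (c w₂.1.succ)) := by
      rw [rowSeg_append _ (hc w.1.castSucc_le_succ) (hw₂ ▸ hc w₂.1.castSucc_le_succ),
        spell_append, hw₂]
      simp [pathLabel, hi, hi₂, blockStr, hw₂]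
    rw [hlabel]
    exact occursAt_spell_rowSeg _ _ _
  · simp at hrest

lemma exists_path_along_row (hc : Monotone c) (i : Fin m) {s t : Fin b} (hst : s ≤ t) :
    ∃ rest, (∀ u ∈ rest, ValidNode A c u) ∧
      List.IsChain (EdgeRel A c) ((s, blockStr A c i s) :: rest) ∧
      pathLabel ((s, blockStr A c i s) :: rest) =
        spell (rowSeg (A i) (c s.castSucc) (c t.succ)) ∧
      pathLabel ((s, blockStr A c i s) :: rest).dropLast =
        spell (rowSeg (A i) (c s.castSucc) (c t.castSucc)) := by
  obtain ⟨d, hd⟩ : ∃ d, (t : ℕ) = s + d := ⟨t - s, by rw [Fin.le_def] at hst; omega⟩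
  induction d generalizing s with
  | zero =>
    obtain rfl : s = t := Fin.ext hd.symm
    exact ⟨[], by simp, .singleton _, by simp [pathLabel, blockStr],
      by simp [pathLabel, rowSeg, spell]⟩
  | succ d ih =>
    set s' : Fin b := ⟨s + 1, by omega⟩
    have hss' : s.succ = s'.castSucc := rfl
    obtain ⟨rest, hvalid, hchain, hlabel, hdrop⟩ :=
      ih (s := s') (by rw [Fin.le_def]; simp [s']; omega) (by simp [s']; omega)
    have hsplit : ∀ y, s'.castSucc ≤ y → spell (rowSeg (A i) (c s.castSucc) (c y)) =
        blockStr A c i s ++ spell (rowSeg (A i) (c s'.castSucc) (c y)) := fun y hy => by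
      rw [blockStr, hss', ← spell_append, ← rowSeg_append _ (hss' ▸ hc s.castSucc_le_succ) (hc hy)]
    refine ⟨(s', blockStr A c i s') :: rest, ?_, .cons_cons ⟨rfl, i, rfl, rfl⟩ hchain, ?_, ?_⟩
    · rintro u (_ | ⟨_, hu⟩)
      exacts [⟨i, rfl⟩, hvalid u hu]
    · rw [pathLabel_cons, hlabel, hsplit _ (hss' ▸ Fin.succ_le_succ_iff.mpr hst)]
    · rw [List.dropLast_cons_of_ne_nil (List.cons_ne_nil _ _), pathLabel_cons, hdrop,
        hsplit _ (Fin.castSucc_le_castSucc_iff.mpr (Fin.le_def.mpr (by simp [s']; omega)))]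

lemma segSRF_of_efgSRF (hc : Monotone c) (hne : ∀ i k, blockStr A c i k ≠ [])
    (hc0 : c 0 = 0) (hcn : ∀ i, (A i).length ≤ c (Fin.last b)) (hefg : efgSRF A c)
    (k : Fin b) : segSRF A (c k.castSucc) (c k.succ) := by
  intro i i' p (hocc : occursAt (blockStr A c i k) _ p)
  have hG := strictMono_gpos hc hne i'
  have hG0 : gpos (A i') (c 0) = 0 := by simp [hc0, gpos, spell]
  have hGlast : gpos (A i') (c (Fin.last b)) = (spell (A i')).length := by
    rw [gpos, List.take_of_length_le (hcn i')]
  have hu : 0 < (blockStr A c i k).length := List.length_pos_iff.mpr (hne i k)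
  have hend : p + (blockStr A c i k).length ≤ (spell (A i')).length := by
    have := hocc.length_le
    simp only [List.length_drop] at this
    omega
  obtain ⟨s, hs₁, hs₂⟩ := exists_castSucc_le_lt_succ (α := ℕ) (fun j => gpos (A i') (c j))
    (a := p) (by omega) (by omega)
  obtain ⟨t, ht₁, ht₂⟩ := exists_castSucc_le_lt_succ (α := ℕ) (fun j => gpos (A i') (c j))
    (a := p + (blockStr A c i k).length - 1) (by omega) (by omega)
  have hst : s ≤ t := Fin.castSucc_lt_succ_iff.mp (hG.lt_iff_lt.mp (by omega))
  obtain ⟨rest, hvalid, hchain, hlabel, hdrop⟩ := exists_path_along_row hc i' hst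
  have hlabel_len := gpos_add (A i') (hc (Fin.castSucc_lt_succ_iff.mpr hst).le)
  have hdrop_len := gpos_add (A i') (hc (Fin.castSucc_le_castSucc_iff.mpr hst))
  have hs_len := gpos_succ (A := A) hc i' s
  obtain ⟨hp, hsk : s = k⟩ := hefg (k, blockStr A c i k) ⟨i, rfl⟩ (s, blockStr A c i' s) rest
    ⟨i', rfl⟩ hvalid hchain (p - gpos (A i') (c s.castSucc))
    (hlabel ▸ occursAt_sub hocc (occursAt_spell_rowSeg _ _ _) hs₁ (by dsimp only; omega))
    (by dsimp only; omega) (by rw [hdrop]; dsimp only; omega)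
  subst hsk
  omega

lemma efgSRF_of_segSRF (hc : Monotone c) (hne : ∀ i k, blockStr A c i k ≠ [])
    (hseg : ∀ k : Fin b, segSRF A (c k.castSucc) (c k.succ)) : efgSRF A c := by
  rintro ⟨k, _⟩ ⟨i, hv : _ = blockStr A c i k⟩ w rest hw - hchain p hocc hp hdrop
  subst hv
  dsimp only at hocc hdrop ⊢
  by_cases hshort : rest.length ≤ 1
  · obtain ⟨i', hw', hpath⟩ := exists_occursAt_pathLabel_of_length_le_one hc hw hchain hshort
    exact eq_of_occursAt_blockStr hc hne (hseg k) (hw' ▸ hp) (occursAt_trans hocc hpath)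
  · obtain ⟨w₂, u, r, rfl⟩ : ∃ w₂ u r, rest = w₂ :: u :: r := by
      rcases rest with _ | ⟨w₂, _ | ⟨u, r⟩⟩ <;> simp at hshort ⊢
    obtain ⟨⟨-, i', -, hw₂⟩, -⟩ := List.isChain_cons_cons.mp hchain
    have hw₂occ : occursAt w₂.2 (pathLabel (w :: w₂ :: u :: r)) w.2.length := by
      rw [occursAt, pathLabel_cons, List.drop_left, pathLabel_cons]
      exact List.prefix_append _ _
    have hcover : w.2.length + w₂.2.length ≤ (pathLabel (w :: w₂ :: u :: r).dropLast).length := by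
      simp [pathLabel]
    have hin := occursAt_sub hw₂occ hocc hp.le (by omega)
    have := eq_of_occursAt_blockStr hc hne (hseg w₂.1) (i := i') (q := w.2.length - p)
      (by omega) (hw₂ ▸ occursAt_trans hin (occursAt_blockStr i k))
    omega

end SemiRepeatFree

open SemiRepeatFree

theorem stmt11_general {σ : Type*} {m n b : ℕ}
    (A : Fin m → List (Option σ)) (hlen : ∀ i, (A i).length = n)
    (c : Fin (b+1) → ℕ) (hc0 : c 0 = 0) (hcn : c (Fin.last b) = n)
    (hmono : StrictMono c)
    (hnonempty : ∀ (i : Fin m) (k : Fin b), blockStr A c i k ≠ []) :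
    efgSRF A c ↔ ∀ k : Fin b, segSRF A (c k.castSucc) (c k.succ) :=
  ⟨segSRF_of_efgSRF hmono.monotone hnonempty hc0 (fun i => ((hlen i).trans hcn.symm).le),
    efgSRF_of_segSRF hmono.monotone hnonempty⟩

/-- the elastic founder graph induced by a segmentation is semi-repeat-free
iff every segment of the segmentation is semi-repeat-free. -/
theorem stmt11 {σ : Type*} {m n b : ℕ} (hm : 0 < m) (hb : 0 < b)
    (A : Fin m → List (Option σ)) (hlen : ∀ i, (A i).length = n)
    (c : Fin (b+1) → ℕ) (hc0 : c 0 = 0) (hcn : c (Fin.last b) = n)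
    (hmono : StrictMono c)
    (hnonempty : ∀ (i : Fin m) (k : Fin b), blockStr A c i k ≠ []) :
    efgSRF A c ↔ ∀ k : Fin b, segSRF A (c k.castSucc) (c k.succ) :=
  stmt11_general A hlen c hc0 hcn hmono hnonempty
end
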